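/- Let β₁ ∈ (0,1) and t ≥ 1. Suppose a real sequence (P_j)_{j=0}^{t} satisfies P_0 = 0, P_t - β₁ P_{t-1} ≥ a, and P_j - β₁ P_{j-1} ≥ -b for all 1 ≤ j ≤ t-1, where a, b ≥ 0. Then P_t ≥ a - b·(β₁ - β₁^t)/(1 - β₁). -/
import Mathlib


/-- lower bound on `P t` from bounds on the increments. -/
theorem telescoping_lower_bound (β₁ : ℝ) (hβ₁ : β₁ ∈ Set.Ioo (0:ℝ) 1)
    (a b : ℝ) (ha : 0 ≤ a) (hb : 0 ≤ b)
    (t : ℕ) (ht : 1 ≤ t) (P : ℕ → ℝ) (hP0 : P 0 = 0)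
    (hlast : P t - β₁ * P (t - 1) ≥ a)
    (hrest : ∀ j : ℕ, 1 ≤ j → j ≤ t - 1 → P j - β₁ * P (j - 1) ≥ -b) :
    P t ≥ a - b * (β₁ - β₁ ^ t) / (1 - β₁) := by
  obtain ⟨hb0, hb1⟩ := hβ₁
  have hpos : 0 < 1 - β₁ := by linarith
  have key : ∀ j, j ≤ t - 1 → P j ≥ -b * (1 - β₁ ^ j) / (1 - β₁) := by
    intro j
    induction j with
    | zero => intro _; simp [hP0]
    | succ k ih =>
      intro hk
      have hk' : k ≤ t - 1 := Nat.le_of_succ_le hk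
      have ihk := ih hk'
      have hstep := hrest (k + 1) (Nat.succ_le_succ (Nat.zero_le k)) hk
      simp only [Nat.add_sub_cancel] at hstep
      have hβP : β₁ * P k ≥ β₁ * (-b * (1 - β₁ ^ k) / (1 - β₁)) :=
        mul_le_mul_of_nonneg_left ihk (le_of_lt hb0)
      have : P (k + 1) ≥ -b + β₁ * (-b * (1 - β₁ ^ k) / (1 - β₁)) := by linarith
      have heq : -b + β₁ * (-b * (1 - β₁ ^ k) / (1 - β₁))
          = -b * (1 - β₁ ^ (k + 1)) / (1 - β₁) := by
        field_simp
        ring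
      linarith [heq ▸ this]
  have hkey := key (t - 1) le_rfl
  have hβP : β₁ * P (t - 1) ≥ β₁ * (-b * (1 - β₁ ^ (t - 1)) / (1 - β₁)) :=
    mul_le_mul_of_nonneg_left hkey (le_of_lt hb0)
  have hpow : β₁ * β₁ ^ (t - 1) = β₁ ^ t := by
    rw [← pow_succ']
    congr 1
    omega
  have heq : β₁ * (-b * (1 - β₁ ^ (t - 1)) / (1 - β₁))
      = -(b * (β₁ - β₁ ^ t) / (1 - β₁)) := by
    rw [← hpow]
    ring
  rw [heq] at hβP
  linarith
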